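/- Let f : D → ℝ^n be a continuous, discrete mapping on a domain D ⊂ ℝ^n, let α : [a,c) → D be a path whose image is contained in a compact subset K of D, and suppose that f ∘ α : [a,c) → ℝ^n extends to a continuous path β : [a,c] → ℝ^n. Then α extends to a continuous path α : [a,c] → K; that is, the limit of α(t) as t → c⁻ exists. In particular, the cluster set G = {x ∈ ℝ^n : x = lim_{k→∞} α(t_k) for some sequence t_k ∈ [a,c) with t_k → c} is a single point. -/

import Mathlib

open MeasureTheory Metric Set Filter Topology
open scoped ENNReal NNReal Classical

noncomputable section

/-- Euclidean space `ℝⁿ`. -/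
abbrev Eucl (n : ℕ) : Type := EuclideanSpace ℝ (Fin n)

/-- Projection from the one-point compactification `ℝ̄ⁿ = ℝⁿ ∪ {∞}` back to `ℝⁿ`,
sending the point `∞` to the junk value `0`. -/
def opProj {X : Type*} [Zero X] (y : OnePoint X) : X := Option.getD y 0

/-- The point of the curve `γ` (defined on the parameter set `s ⊆ ℝ`) lying at
arclength `u` from its beginning: the arclength parametrization of `γ`. -/
def arcParamOn {X : Type*} [PseudoEMetricSpace X] (γ : ℝ → X) (s : Set ℝ) (u : ℝ) : X :=
  γ (sInf {t | t ∈ s ∧ ENNReal.ofReal u ≤ eVariationOn γ (s ∩ Set.Iic t)})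

/-- The line integral `∫_γ ρ ds` of a Borel function `ρ : ℝⁿ → [0,∞]` along a curve
`γ` defined on the parameter set `s ⊆ ℝ`, computed via the arclength parametrization.
By the standard convention, the line integral along a non-rectifiable curve is `∞`. -/
def lineIntegral {X : Type*} [PseudoEMetricSpace X] (ρ : X → ℝ≥0∞) (s : Set ℝ)
    (γ : ℝ → X) : ℝ≥0∞ :=
  if eVariationOn γ s = ∞ then ∞
  else ∫⁻ u in Set.Icc 0 (eVariationOn γ s).toReal, ρ (arcParamOn γ s u)

/-- Line integral of `ρ : ℝⁿ → [0,∞]` along a curve into `ℝ̄ⁿ`; a curve passing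
through `∞` is treated as non-rectifiable, i.e. the integral is `∞`. -/
def lineIntegralOP {n : ℕ} (ρ : Eucl n → ℝ≥0∞) (s : Set ℝ)
    (γ : ℝ → OnePoint (Eucl n)) : ℝ≥0∞ :=
  if ∀ t ∈ s, γ t ≠ OnePoint.infty then lineIntegral ρ s (fun t => opProj (γ t)) else ∞

/-- A curve, recorded as its parameter set (an interval in `ℝ`) together with the map. -/
abbrev Curve (X : Type*) := Set ℝ × (ℝ → X)

/-- A Borel function `ρ : ℝⁿ → [0,∞]` is admissible for a family `Γ` of curves in `ℝ̄ⁿ`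
if `∫_γ ρ ds ≥ 1` for every `γ ∈ Γ`. -/
def IsAdmissible {n : ℕ} (ρ : Eucl n → ℝ≥0∞) (Γ : Set (Curve (OnePoint (Eucl n)))) : Prop :=
  Measurable ρ ∧ ∀ c ∈ Γ, 1 ≤ lineIntegralOP ρ c.1 c.2

/-- The `p`-modulus `M_p(Γ)` of a family of curves in `ℝ̄ⁿ`:
`M_p(Γ) = inf ∫ ρ(x)^p dm(x)` over all admissible `ρ`. -/
def modulus {n : ℕ} (p : ℝ) (Γ : Set (Curve (OnePoint (Eucl n)))) : ℝ≥0∞ :=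
  ⨅ (ρ : Eucl n → ℝ≥0∞) (_ : IsAdmissible ρ Γ), ∫⁻ x, ρ x ^ p

/-- The family `Γ(S₁,S₂,A)` of all curves joining `S₁` and `S₂` in `A`:
`γ : [a,b] → ℝⁿ` with `γ a ∈ S₁`, `γ b ∈ S₂` and `γ t ∈ A` for `a < t < b`. -/
def joinFam {n : ℕ} (S₁ S₂ A : Set (Eucl n)) : Set (Curve (Eucl n)) :=
  {c | ∃ a b : ℝ, a < b ∧ c.1 = Set.Icc a b ∧ ContinuousOn c.2 (Set.Icc a b) ∧
    c.2 a ∈ S₁ ∧ c.2 b ∈ S₂ ∧ ∀ t ∈ Set.Ioo a b, c.2 t ∈ A}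

/-- The image family `fΓ = {f ∘ γ : γ ∈ Γ}`. -/
def imageFam {n : ℕ} (f : Eucl n → OnePoint (Eucl n)) (Γ : Set (Curve (Eucl n))) :
    Set (Curve (OnePoint (Eucl n))) :=
  {c | ∃ g ∈ Γ, c = (g.1, fun t => f (g.2 t))}

/-- The spherical annulus (ring) `A(r₁,r₂,x₀) = {x : r₁ < |x-x₀| < r₂}`. -/
def ann {n : ℕ} (x₀ : Eucl n) (r₁ r₂ : ℝ) : Set (Eucl n) :=
  {x | r₁ < dist x x₀ ∧ dist x x₀ < r₂}

/-- `f : D → ℝ̄ⁿ` is a ring `(p,Q)`-mapping: `f` is continuous on `D` and for every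
`x₀ ∈ D`, all radii `0 < r₁ < r₂ < dist(x₀, ∂D)` and every measurable
`η : (r₁,r₂) → [0,∞]` with `∫_{r₁}^{r₂} η(r) dr ≥ 1`, one has
`M_p(f(Γ(S₁,S₂,A))) ≤ ∫_A Q(x) η(|x-x₀|)^p dm(x)`. -/
def IsRingMapping {n : ℕ} (p : ℝ) (D : Set (Eucl n)) (Q : Eucl n → ℝ≥0∞)
    (f : Eucl n → OnePoint (Eucl n)) : Prop :=
  ContinuousOn f D ∧
  ∀ x₀ ∈ D, ∀ r₁ r₂ : ℝ, 0 < r₁ → r₁ < r₂ →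
    ENNReal.ofReal r₂ < EMetric.infEdist x₀ Dᶜ →
    ∀ η : ℝ → ℝ≥0∞, Measurable η → 1 ≤ ∫⁻ r in Set.Ioo r₁ r₂, η r →
      modulus p (imageFam f
          (joinFam (Metric.sphere x₀ r₁) (Metric.sphere x₀ r₂) (ann x₀ r₁ r₂)))
        ≤ ∫⁻ x in ann x₀ r₁ r₂, Q x * η (dist x x₀) ^ p

/-- `f` is discrete on `D`: every fiber `f⁻¹(y)` consists of isolated points. -/
def DiscreteOn {X Y : Type*} [TopologicalSpace X] (f : X → Y) (D : Set X) : Prop :=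
  ∀ y : Y, ∀ x ∈ D, f x = y → ∃ U ∈ 𝓝 x, ∀ z ∈ U, z ∈ D → f z = y → z = x

/-- `f` is open on `D`: images of open subsets of `D` are open. -/
def OpenOn {X Y : Type*} [TopologicalSpace X] [TopologicalSpace Y]
    (f : X → Y) (D : Set X) : Prop :=
  ∀ U ⊆ D, IsOpen U → IsOpen (f '' U)

/-- `Q ∈ L¹_loc(D)` for `Q : D → [0,∞]`. -/
def LocIntOn {n : ℕ} (Q : Eucl n → ℝ≥0∞) (D : Set (Eucl n)) : Prop :=
  Measurable Q ∧ ∀ K ⊆ D, IsCompact K → ∫⁻ x in K, Q x ≠ ∞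

/-- `h : [a,b] → F` is absolutely continuous: for every `ε > 0` there is `δ > 0` such
that for any finite collection of mutually non-overlapping subintervals
`[uᵢ,vᵢ] ⊆ [a,b]` of total length `< δ` one has `Σ ‖h(vᵢ) - h(uᵢ)‖ < ε`. -/
def AbsContOnInt {F : Type*} [NormedAddCommGroup F] (h : ℝ → F) (a b : ℝ) : Prop :=
  ∀ ε : ℝ, 0 < ε → ∃ δ : ℝ, 0 < δ ∧ ∀ k : ℕ, ∀ u v : Fin k → ℝ,
    (∀ i, a ≤ u i ∧ u i ≤ v i ∧ v i ≤ b) →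
    (Pairwise fun i j => Disjoint (Set.Ioo (u i) (v i)) (Set.Ioo (u j) (v j))) →
    (∑ i, (v i - u i)) < δ → (∑ i, ‖h (v i) - h (u i)‖) < ε

/-- The closed coordinate box with corners `lo`, `hi`. -/
def box {n : ℕ} (lo hi : Eucl n) : Set (Eucl n) :=
  {x : Eucl n | ∀ i, lo i ≤ x i ∧ x i ≤ hi i}

/-- `u` is `ACL` (absolutely continuous on lines) on the open set `A ⊆ ℝⁿ`: for every
closed coordinate box contained in `A` and every coordinate direction `j`,
`u` is absolutely continuous on almost every line segment of the box parallel to the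
`j`-th axis. -/
def ACLOn {n : ℕ} {F : Type*} [NormedAddCommGroup F] (u : Eucl n → F)
    (A : Set (Eucl n)) : Prop :=
  ∀ lo hi : Eucl n, (∀ i, lo i < hi i) → box lo hi ⊆ A →
    ∀ j : Fin n, ∀ᵐ x ∂(volume : Measure (Eucl n)), x ∈ box lo hi →
      AbsContOnInt (fun t => u (WithLp.toLp 2 (Function.update (WithLp.ofLp x) j t))) (lo j) (hi j)

/-- The `p`-capacity of a condenser `(A, C)`:
`cap_p(A,C) = inf ∫_A |∇u|^p dm` over all nonnegative continuous `ACL` functions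
`u` on `A` with `u ≥ 1` on `C`. -/
def pCapacity {n : ℕ} (p : ℝ) (A C : Set (Eucl n)) : ℝ≥0∞ :=
  ⨅ (u : Eucl n → ℝ) (_ : ContinuousOn u A ∧ (∀ x ∈ A, 0 ≤ u x) ∧
      (∀ x ∈ C, 1 ≤ u x) ∧ ACLOn u A),
    ∫⁻ x in A, ENNReal.ofReal (‖fderiv ℝ u x‖ ^ p)


/-! Every cluster point of `α` at `c⁻` lies in `K` and, by continuity of `f`, in the fibre
`f⁻¹(β c)`, whose points are isolated. If `α` did not converge to a cluster point `x₀`, then by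
the intermediate value theorem it would meet every small sphere around `x₀` for parameters
arbitrarily close to `c`, and compactness of `K` would produce a second cluster point on that
sphere, close to `x₀`. -/

theorem MapClusterPt.apply_eq_of_tendsto_comp {ι X Y : Type*} [TopologicalSpace X]
    [TopologicalSpace Y] [T2Space Y] {l : Filter ι} {u : ι → X} {f : X → Y} {x : X} {y : Y}
    (hx : MapClusterPt x l u) (hf : ContinuousAt f x) (hfu : Tendsto (f ∘ u) l (𝓝 y)) :
    f x = y :=
  eq_of_nhds_neBot ((hx.continuousAt_comp hf).clusterPt.mono hfu)

theorem frequently_eq_of_frequently_le_of_frequently_ge {g : ℝ → ℝ} {s : Set ℝ} {c r : ℝ}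
    (hs : s ∈ 𝓝[<] c) (hg : ContinuousOn g s) (hle : ∃ᶠ t in 𝓝[<] c, g t ≤ r)
    (hge : ∃ᶠ t in 𝓝[<] c, r ≤ g t) : ∃ᶠ t in 𝓝[<] c, g t = r := by
  rw [Filter.frequently_iff]
  intro V hV
  obtain ⟨b, hbc, hb⟩ := mem_nhdsLT_iff_exists_Ioo_subset.1 (inter_mem hs hV)
  have hI : Ioo b c ∈ 𝓝[<] c := Ioo_mem_nhdsLT hbc
  obtain ⟨t₁, hgt₁, ht₁⟩ := (hle.and_eventually hI).exists
  obtain ⟨t₂, hgt₂, ht₂⟩ := (hge.and_eventually hI).exists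
  obtain ⟨t, ht, hgt⟩ := isPreconnected_Ioo.intermediate_value ht₁ ht₂
    (hg.mono fun t ht => (hb ht).1) ⟨hgt₁, hgt₂⟩
  exact ⟨t, (hb ht).2, hgt⟩

theorem tendsto_nhdsLT_of_isolated_mapClusterPt {E : Type*} [MetricSpace E] {α : ℝ → E}
    {s : Set ℝ} {c : ℝ} {K : Set E} {x₀ : E} (hs : s ∈ 𝓝[<] c) (hα : ContinuousOn α s)
    (hK : IsCompact K) (hαK : ∀ᶠ t in 𝓝[<] c, α t ∈ K) (hx₀ : MapClusterPt x₀ (𝓝[<] c) α)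
    (hiso : ∀ᶠ y in 𝓝 x₀, MapClusterPt y (𝓝[<] c) α → y = x₀) :
    Tendsto α (𝓝[<] c) (𝓝 x₀) := by
  rw [Metric.tendsto_nhds]
  by_contra! hfar
  obtain ⟨ε, hε, hfar⟩ := hfar
  obtain ⟨δ, hδ, hδiso⟩ := Metric.eventually_nhds_iff_ball.1 hiso
  set r := min (δ / 2) ε
  have hr : 0 < r := lt_min (half_pos hδ) hε
  have hsphere : ∃ᶠ t in 𝓝[<] c, dist (α t) x₀ = r :=
    frequently_eq_of_frequently_le_of_frequently_ge hs
      ((continuous_id.dist continuous_const).comp_continuousOn hα)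
      (hx₀.frequently (Metric.ball_mem_nhds x₀ hr) |>.mono fun _ h => h.le)
      (hfar.mono fun _ h => (min_le_right _ _).trans h)
  obtain ⟨y, ⟨-, hyr⟩, hy⟩ :=
    (hK.inter_right (isClosed_sphere (x := x₀) (ε := r))).exists_mapClusterPt_of_frequently
      ((hsphere.and_eventually hαK).mono fun _ h => ⟨h.2, h.1⟩)
  have hyδ : y ∈ ball x₀ δ := by
    rw [mem_ball, hyr]
    exact (min_le_left _ _).trans_lt (half_lt_self hδ)
  have hyx₀ : y = x₀ := hδiso y hyδ hy
  rw [hyx₀, mem_sphere, dist_self] at hyr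
  exact hr.ne hyr

theorem setOf_seq_limit_comp_eq_singleton {Y X : Type*} [TopologicalSpace Y]
    [FrechetUrysohnSpace Y] [TopologicalSpace X] [T2Space X] {α : Y → X} {s : Set Y} {c : Y}
    {x₀ : X} (hc : c ∈ closure s) (h : Tendsto α (𝓝[s] c) (𝓝 x₀)) :
    {x : X | ∃ u : ℕ → Y, (∀ k, u k ∈ s) ∧ Tendsto u atTop (𝓝 c) ∧
      Tendsto (fun k => α (u k)) atTop (𝓝 x)} = {x₀} := by
  have hseq : ∀ u : ℕ → Y, (∀ k, u k ∈ s) → Tendsto u atTop (𝓝 c) →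
      Tendsto (fun k => α (u k)) atTop (𝓝 x₀) :=
    fun u hus huc => h.comp (tendsto_nhdsWithin_iff.2 ⟨huc, .of_forall hus⟩)
  ext x
  constructor
  · rintro ⟨u, hus, huc, hux⟩
    exact tendsto_nhds_unique hux (hseq u hus huc)
  · rintro rfl
    obtain ⟨u, hus, huc⟩ := mem_closure_iff_seq_limit.1 hc
    exact ⟨u, hus, huc, hseq u hus huc⟩

theorem lift_extends_to_endpoint_general (n : ℕ) (D : Set (Eucl n)) (hD : IsOpen D)
    (f : Eucl n → Eucl n) (hfc : ContinuousOn f D)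
    (hdisc : DiscreteOn f D)
    (a c : ℝ) (hac : a < c) (α : ℝ → Eucl n) (hα : ContinuousOn α (Set.Ico a c))
    (K : Set (Eucl n)) (hK : IsCompact K) (hKD : K ⊆ D)
    (hαK : Set.MapsTo α (Set.Ico a c) K)
    (β : ℝ → Eucl n) (hβ : ContinuousOn β (Set.Icc a c))
    (hβα : ∀ t ∈ Set.Ico a c, β t = f (α t)) :
    ∃ x₀ ∈ K, Filter.Tendsto α (𝓝[Set.Ico a c] c) (𝓝 x₀) ∧
      {x : Eucl n | ∃ s : ℕ → ℝ, (∀ k, s k ∈ Set.Ico a c) ∧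
        Filter.Tendsto s Filter.atTop (𝓝 c) ∧
        Filter.Tendsto (fun k => α (s k)) Filter.atTop (𝓝 x)} = {x₀} := by
  have hIco : Ico a c ∈ 𝓝[<] c := Ico_mem_nhdsLT hac
  have hαK' : ∀ᶠ t in 𝓝[<] c, α t ∈ K := mem_of_superset hIco hαK
  have hfα : Tendsto (f ∘ α) (𝓝[<] c) (𝓝 (β c)) := by
    refine Tendsto.congr' (eventually_of_mem hIco hβα) ?_
    rw [← nhdsWithin_Ico_eq_nhdsLT hac]
    exact (hβ c (right_mem_Icc.2 hac.le)).mono Ico_subset_Icc_self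
  have hfiber : ∀ y, MapClusterPt y (𝓝[<] c) α → y ∈ K ∧ f y = β c := fun y hy =>
    have hyK := hK.isClosed.mem_of_mapClusterPt hy hαK'
    ⟨hyK, hy.apply_eq_of_tendsto_comp (hfc.continuousAt (hD.mem_nhds (hKD hyK))) hfα⟩
  obtain ⟨x₀, hx₀K, hx₀⟩ := hK.exists_mapClusterPt_of_frequently hαK'.frequently
  obtain ⟨U, hU, hUx₀⟩ := hdisc (β c) x₀ (hKD hx₀K) (hfiber x₀ hx₀).2
  have hiso : ∀ᶠ y in 𝓝 x₀, MapClusterPt y (𝓝[<] c) α → y = x₀ :=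
    eventually_of_mem hU fun y hyU hy =>
      hUx₀ y hyU (hKD (hfiber y hy).1) (hfiber y hy).2
  have hlim : Tendsto α (𝓝[Ico a c] c) (𝓝 x₀) := by
    rw [nhdsWithin_Ico_eq_nhdsLT hac]
    exact tendsto_nhdsLT_of_isolated_mapClusterPt hIco hα hK hαK' hx₀ hiso
  refine ⟨x₀, hx₀K, hlim, setOf_seq_limit_comp_eq_singleton ?_ hlim⟩
  rw [closure_Ico hac.ne]
  exact right_mem_Icc.2 hac.le

/-- Let `f : D → ℝⁿ` be continuous and discrete on a domain `D ⊆ ℝⁿ`, let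
`α : [a,c) → D` be a path whose image lies in a compact `K ⊆ D`, and suppose
`f ∘ α` extends to a continuous path `β : [a,c] → ℝⁿ`. Then `lim_{t→c⁻} α(t)`
exists (in `K`); in particular the cluster set of `α` at `c` is a single point. -/
theorem lift_extends_to_endpoint (n : ℕ) (D : Set (Eucl n)) (hD : IsOpen D)
    (hDconn : IsConnected D) (f : Eucl n → Eucl n) (hfc : ContinuousOn f D)
    (hdisc : DiscreteOn f D)
    (a c : ℝ) (hac : a < c) (α : ℝ → Eucl n) (hα : ContinuousOn α (Set.Ico a c))
    (K : Set (Eucl n)) (hK : IsCompact K) (hKD : K ⊆ D)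
    (hαK : Set.MapsTo α (Set.Ico a c) K)
    (β : ℝ → Eucl n) (hβ : ContinuousOn β (Set.Icc a c))
    (hβα : ∀ t ∈ Set.Ico a c, β t = f (α t)) :
    ∃ x₀ ∈ K, Filter.Tendsto α (𝓝[Set.Ico a c] c) (𝓝 x₀) ∧
      {x : Eucl n | ∃ s : ℕ → ℝ, (∀ k, s k ∈ Set.Ico a c) ∧
        Filter.Tendsto s Filter.atTop (𝓝 c) ∧
        Filter.Tendsto (fun k => α (s k)) Filter.atTop (𝓝 x)} = {x₀} :=
  lift_extends_to_endpoint_general n D hD f hfc hdisc a c hac α hα K hK hKD hαK β hβ hβα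

end
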